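/- arXiv:2006.12815 — 4 statements merged into one kernel-verified Lean document; each statement's English description precedes it below -/
import Mathlib

section
/- Let Γ be a connected, stable enhanced level graph without horizontal edges, with admissible enhancement and at least two levels. Then every vertex on the bottom level of Γ carries at least one leg of non-negative order. Consequently, the number of vertices on the bottom level is at most z + n₀, where z is the number of entries m_i > 0 of μ and n₀ is the number of entries m_i = 0. -/
/-- An *enhanced level graph* of type `μ : Fin n → ℤ`: a finite multigraph
with vertex set `V` and edge set `E` (each edge `e` consisting of an upper
half-edge `e⁺` attached at `src e` and a lower half-edge `e⁻` attached at
`dst e`), together with `n` labelled legs, a genus function, a level function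
normalised to take values in `{0, -1, …, -L}` and an enhancement `κ` which
vanishes exactly on the horizontal edges. -/
structure ELG (n : ℕ) (μ : Fin n → ℤ) where
  V : Type
  E : Type
  fintypeV : Fintype V
  decEqV : DecidableEq V
  fintypeE : Fintype E
  decEqE : DecidableEq E
  /-- the vertex carrying the upper half-edge `e⁺` -/
  src : E → V
  /-- the vertex carrying the lower half-edge `e⁻` -/
  dst : E → V
  /-- the vertex carrying the `i`-th labelled leg -/
  legAt : Fin n → V
  genus : V → ℕ
  level : V → ℤ
  /-- the levels are `0, -1, …, -L` -/
  L : ℕ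
  level_mem : ∀ v, -(L : ℤ) ≤ level v ∧ level v ≤ 0
  level_surj : ∀ j : Fin (L + 1), ∃ v, level v = -(j : ℤ)
  level_mono : ∀ e, level (dst e) ≤ level (src e)
  /-- the enhancement `κ` -/
  kappa : E → ℕ
  kappa_zero_iff : ∀ e, kappa e = 0 ↔ level (src e) = level (dst e)

attribute [instance] ELG.fintypeV ELG.decEqV ELG.fintypeE ELG.decEqE

namespace ELG

variable {n : ℕ} {μ : Fin n → ℤ}

/-- The order function: the `i`-th leg has order `μ i`, the upper half-edge of
`e` has order `κ e - 1`, the lower one has order `-κ e - 1`.  The *degree* of a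
vertex is the sum of the orders of all legs and half-edges attached to it. -/
def deg (Γ : ELG n μ) (v : Γ.V) : ℤ :=
  (∑ i ∈ Finset.univ.filter (fun i => Γ.legAt i = v), μ i)
    + (∑ e ∈ Finset.univ.filter (fun e => Γ.src e = v), ((Γ.kappa e : ℤ) - 1))
    + (∑ e ∈ Finset.univ.filter (fun e => Γ.dst e = v), (-(Γ.kappa e : ℤ) - 1))

/-- The enhancement is *admissible* if `deg v = 2 g(v) - 2` for every vertex. -/
def Admissible (Γ : ELG n μ) : Prop :=
  ∀ v, Γ.deg v = 2 * (Γ.genus v : ℤ) - 2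

/-- Number of legs at a vertex. -/
def numLegsAt (Γ : ELG n μ) (v : Γ.V) : ℕ :=
  (Finset.univ.filter (fun i => Γ.legAt i = v)).card

/-- Number of half-edges at a vertex (a loop counts twice). -/
def numHalfEdgesAt (Γ : ELG n μ) (v : Γ.V) : ℕ :=
  (Finset.univ.filter (fun e => Γ.src e = v)).card
    + (Finset.univ.filter (fun e => Γ.dst e = v)).card

/-- Stability: `2 g(v) - 2` plus the number of legs and half-edges at `v` is
positive for every vertex `v`. -/
def Stable (Γ : ELG n μ) : Prop :=
  ∀ v, 0 < 2 * (Γ.genus v : ℤ) - 2 + (Γ.numLegsAt v : ℤ) + (Γ.numHalfEdgesAt v : ℤ)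

/-- The edge `e` connects the vertices `a` and `b` (in either direction). -/
def Connects (Γ : ELG n μ) (e : Γ.E) (a b : Γ.V) : Prop :=
  (Γ.src e = a ∧ Γ.dst e = b) ∨ (Γ.src e = b ∧ Γ.dst e = a)

/-- Adjacency via some edge. -/
def Adj (Γ : ELG n μ) (a b : Γ.V) : Prop := ∃ e, Γ.Connects e a b

/-- Connectivity of the graph. -/
def Connected (Γ : ELG n μ) : Prop :=
  Nonempty Γ.V ∧ ∀ a b : Γ.V, Relation.ReflTransGen Γ.Adj a b

/-- The total genus `g = ∑ g(v) + |E| - |V| + 1` of a connected graph. -/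
def totalGenus (Γ : ELG n μ) : ℤ :=
  (∑ v, (Γ.genus v : ℤ)) + (Fintype.card Γ.E : ℤ) - (Fintype.card Γ.V : ℤ) + 1

/-- No horizontal edges. -/
def NoHorizontal (Γ : ELG n μ) : Prop :=
  ∀ e, Γ.level (Γ.src e) ≠ Γ.level (Γ.dst e)

/-- The multiset of absolute values `b` of the *negative* orders `-b` of the
legs and half-edges at a vertex `v`. -/
def poleOrders (Γ : ELG n μ) (v : Γ.V) : Multiset ℤ :=
  ((Finset.univ.filter (fun i => Γ.legAt i = v ∧ μ i < 0)).val.map (fun i => -μ i))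
    + ((Finset.univ.filter (fun e => Γ.src e = v ∧ ((Γ.kappa e : ℤ) - 1) < 0)).val.map
        (fun e => -((Γ.kappa e : ℤ) - 1)))
    + ((Finset.univ.filter (fun e => Γ.dst e = v)).val.map (fun e => (Γ.kappa e : ℤ) + 1))

/-- A vertex is *inconvenient* if it has genus `0`, no leg or half-edge at it
has order `-1`, and among the absolute values `b₁, …, b_p` of the negative
orders at `v` there is some `bᵢ > b₁ + ⋯ + b_p - p - 1`. -/
def Inconvenient (Γ : ELG n μ) (v : Γ.V) : Prop :=
  Γ.genus v = 0 ∧ (1 : ℤ) ∉ Γ.poleOrders v ∧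
    ∃ b ∈ Γ.poleOrders v,
      (Γ.poleOrders v).sum - (Multiset.card (Γ.poleOrders v) : ℤ) - 1 < b

/-- There is a simple cycle based at `v` all of whose vertices lie on levels
`≥ ℓ(v)`. -/
def HasHighCycleAt (Γ : ELG n μ) (v : Γ.V) : Prop :=
  ∃ (m : ℕ) (hm : 2 ≤ m) (vs : Fin m → Γ.V) (es : Fin m → Γ.E),
    Function.Injective vs ∧ Function.Injective es ∧ vs ⟨0, by omega⟩ = v ∧
    (∀ k : Fin m, Γ.Connects (es k) (vs k) (vs ⟨(k.val + 1) % m, Nat.mod_lt _ (by omega)⟩)) ∧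
    (∀ k : Fin m, Γ.level v ≤ Γ.level (vs k))

/-- Realizability of a connected stable admissible enhanced level graph without
horizontal edges over a holomorphic stratum: every inconvenient vertex lies on
a simple cycle not passing below its own level. -/
def Realizable (Γ : ELG n μ) : Prop :=
  Γ.Connected ∧ Γ.Stable ∧ Γ.Admissible ∧ Γ.NoHorizontal ∧
    ∀ v, Γ.Inconvenient v → Γ.HasHighCycleAt v

/-- An isomorphism of enhanced level graphs of the same type: bijections of
vertices and edges preserving incidence, genus, level, enhancement and fixing
each labelled leg. -/
structure Iso (Γ₁ Γ₂ : ELG n μ) where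
  vEquiv : Γ₁.V ≃ Γ₂.V
  eEquiv : Γ₁.E ≃ Γ₂.E
  src_map : ∀ e, Γ₂.src (eEquiv e) = vEquiv (Γ₁.src e)
  dst_map : ∀ e, Γ₂.dst (eEquiv e) = vEquiv (Γ₁.dst e)
  leg_map : ∀ i, Γ₂.legAt i = vEquiv (Γ₁.legAt i)
  genus_map : ∀ v, Γ₂.genus (vEquiv v) = Γ₁.genus v
  level_map : ∀ v, Γ₂.level (vEquiv v) = Γ₁.level v
  kappa_map : ∀ e, Γ₂.kappa (eEquiv e) = Γ₁.kappa e

/-- The edge `e` crosses the `i`-th level passage (between levels `-(i-1)` and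
`-i`). -/
def Crosses (Γ : ELG n μ) (e : Γ.E) (i : ℕ) : Prop :=
  -(i : ℤ) + 1 ≤ Γ.level (Γ.src e) ∧ Γ.level (Γ.dst e) ≤ -(i : ℤ)

instance (Γ : ELG n μ) (e : Γ.E) (i : ℕ) : Decidable (Γ.Crosses e i) :=
  inferInstanceAs (Decidable (_ ∧ _))

/-- The set of edges contracted by the undegeneration `δ_I`: those crossing no
level passage in `I`. -/
def contractedEdges (Γ : ELG n μ) (I : Finset ℕ) : Finset Γ.E :=
  Finset.univ.filter (fun e => ∀ i ∈ I, ¬ Γ.Crosses e i)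

/-- Two vertices are related if some edge of `T` connects them. -/
def contractRel (Γ : ELG n μ) (T : Finset Γ.E) (a b : Γ.V) : Prop :=
  ∃ e ∈ T, Γ.Connects e a b

/-- Witness data exhibiting `Δ` as the undegeneration `δ_I(Γ)`: the vertices of
`Δ` are the connected components of the edges of `Γ` contracted by `δ_I`, the
edges of `Δ` are the remaining edges with their enhancements, the legs keep
their positions, the genus of a merged vertex is the sum of the genera of its
vertices plus the first Betti number of the merged component, and the level
function is induced by collapsing the contracted level passages. -/
structure UndegenData (Γ : ELG n μ) (I : Finset ℕ) (Δ : ELG n μ) where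
  vmap : Γ.V → Δ.V
  vmap_surj : Function.Surjective vmap
  fiber_eq : ∀ a b, vmap a = vmap b ↔
    Relation.EqvGen (Γ.contractRel (Γ.contractedEdges I)) a b
  eEquiv : {e : Γ.E // e ∉ Γ.contractedEdges I} ≃ Δ.E
  src_map : ∀ e, Δ.src (eEquiv e) = vmap (Γ.src e.val)
  dst_map : ∀ e, Δ.dst (eEquiv e) = vmap (Γ.dst e.val)
  kappa_map : ∀ e, Δ.kappa (eEquiv e) = Γ.kappa e.val
  leg_map : ∀ i, Δ.legAt i = vmap (Γ.legAt i)
  genus_map : ∀ w : Δ.V,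
    (Δ.genus w : ℤ) =
      (∑ v ∈ Finset.univ.filter (fun v => vmap v = w), (Γ.genus v : ℤ))
        + (((Γ.contractedEdges I).filter (fun e => vmap (Γ.src e) = w)).card : ℤ)
        - ((Finset.univ.filter (fun v : Γ.V => vmap v = w)).card : ℤ) + 1
  level_map : ∀ v, Δ.level (vmap v) =
    -(((I.filter (fun i : ℕ => Γ.level v ≤ -(i : ℤ))).card : ℤ))
  newL : Δ.L = I.card

/-- `Δ` is (isomorphic to) the undegeneration `δ_I(Γ)`. -/
def IsUndegenOf (Γ : ELG n μ) (I : Finset ℕ) (Δ : ELG n μ) : Prop :=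
  Nonempty (Γ.UndegenData I Δ)

end ELG

open ELG

/-- `Λ` is a realizable `(k+1)`-level graph (without horizontal edges) lying in
the profile `(Γ₁, …, Γ_k)`, i.e. `δ_i(Λ) ≅ Γᵢ` for all `i`. -/
def InProfile {n : ℕ} {μ : Fin n → ℤ} {k : ℕ} (Λ : ELG n μ) (Γs : Fin k → ELG n μ) : Prop :=
  Λ.Realizable ∧ Λ.L = k ∧ ∀ i : Fin k, Λ.IsUndegenOf {(i : ℕ) + 1} (Γs i)

/-- The profile `(Γ₁, …, Γ_k)` is non-empty. -/
def ProfileNonEmpty {n : ℕ} {μ : Fin n → ℤ} {k : ℕ} (Γs : Fin k → ELG n μ) : Prop :=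
  ∃ Λ : ELG n μ, InProfile Λ Γs

/-- in a connected stable admissible enhanced level graph without
horizontal edges with at least two levels, every bottom-level vertex carries a
leg of non-negative order; consequently the number of bottom-level vertices is
at most `z + n₀`. -/
theorem bottom_level_vertices_bound (n : ℕ) (μ : Fin n → ℤ) (Γ : ELG n μ)
    (hconn : Γ.Connected) (hst : Γ.Stable) (hnh : Γ.NoHorizontal)
    (hadm : Γ.Admissible) (hL : 1 ≤ Γ.L) :
    (∀ v, Γ.level v = -(Γ.L : ℤ) → ∃ i, Γ.legAt i = v ∧ 0 ≤ μ i) ∧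
      (Finset.univ.filter (fun v : Γ.V => Γ.level v = -(Γ.L : ℤ))).card ≤
        (Finset.univ.filter (fun i => 0 < μ i)).card
          + (Finset.univ.filter (fun i => μ i = 0)).card := by
  
  have key : ∀ v, Γ.level v = -(Γ.L : ℤ) → ∃ i, Γ.legAt i = v ∧ 0 ≤ μ i := by
    intro v hv
    -- no upper half-edge at a bottom vertex
    have hsrc : Finset.univ.filter (fun e => Γ.src e = v) = ∅ := by
      rw [Finset.filter_eq_empty_iff]
      intro e _ he
      have h1 := Γ.level_mono e
      have h2 := (Γ.level_mem (Γ.dst e)).1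
      apply hnh e
      have h3 : Γ.level (Γ.src e) = -(Γ.L : ℤ) := by rw [he, hv]
      omega
    -- there is at least one lower half-edge at v
    obtain ⟨w, hw⟩ := Γ.level_surj ⟨0, by omega⟩
    have hw0 : Γ.level w = 0 := by simpa using hw
    have hvw : v ≠ w := by
      intro h; rw [h, hw0] at hv
      have : (Γ.L : ℤ) = 0 := by omega
      omega
    obtain ⟨b, hb, -⟩ : ∃ b, Γ.Adj v b ∧ Relation.ReflTransGen Γ.Adj b w := by
      rcases (hconn.2 v w).cases_head with h | h
      · exact absurd h hvw
      · exact h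
    obtain ⟨e, he⟩ := hb
    have hde : Γ.dst e = v := by
      rcases he with ⟨h1, _⟩ | ⟨_, h2⟩
      · exfalso
        have : e ∈ Finset.univ.filter (fun e => Γ.src e = v) := by
          simp [h1]
        rw [hsrc] at this
        exact absurd this (Finset.notMem_empty e)
      · exact h2
    have heD : e ∈ Finset.univ.filter (fun e => Γ.dst e = v) := by simp only [Finset.mem_filter, Finset.mem_univ, true_and]; exact hde
    have hd1 : 1 ≤ (Finset.univ.filter (fun e => Γ.dst e = v)).card := Finset.card_pos.mpr ⟨e, heD⟩
    -- each lower half-edge has order ≤ -2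
    have hsumD : (∑ e' ∈ (Finset.univ.filter (fun e => Γ.dst e = v)), (-(Γ.kappa e' : ℤ) - 1)) ≤ -2 * (Finset.univ.filter (fun e => Γ.dst e = v)).card := by
      calc (∑ e' ∈ (Finset.univ.filter (fun e => Γ.dst e = v)), (-(Γ.kappa e' : ℤ) - 1)) ≤ ∑ e' ∈ (Finset.univ.filter (fun e => Γ.dst e = v)), (-2 : ℤ) := by
            apply Finset.sum_le_sum
            intro e' he'
            have hke' : Γ.kappa e' ≠ 0 := by
              intro h0
              have := (Γ.kappa_zero_iff e').mp h0
              exact hnh e' this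
            have : 1 ≤ Γ.kappa e' := Nat.one_le_iff_ne_zero.mpr hke'
            have : (1 : ℤ) ≤ (Γ.kappa e' : ℤ) := by exact_mod_cast this
            omega
        _ = -2 * (Finset.univ.filter (fun e => Γ.dst e = v)).card := by rw [Finset.sum_const]; push_cast; ring
    have hdeg := hadm v
    rw [ELG.deg, hsrc] at hdeg
    simp only [Finset.sum_empty, add_zero] at hdeg
    -- suppose no leg of nonnegative order at v
    by_contra hno
    push_neg at hno
    
    have hsumL : (∑ i ∈ Finset.univ.filter (fun i => Γ.legAt i = v), μ i) ≤ -((Finset.univ.filter (fun i => Γ.legAt i = v)).card : ℤ) := by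
      calc (∑ i ∈ Finset.univ.filter (fun i => Γ.legAt i = v), μ i) ≤ ∑ i ∈ Finset.univ.filter (fun i => Γ.legAt i = v), (-1 : ℤ) := by
            apply Finset.sum_le_sum
            intro i hi
            have := hno i (by simpa using hi)
            omega
        _ = -((Finset.univ.filter (fun i => Γ.legAt i = v)).card : ℤ) := by rw [Finset.sum_const]; push_cast; ring
    have hstab := hst v
    rw [ELG.numLegsAt, ELG.numHalfEdgesAt, hsrc] at hstab
    simp only [Finset.card_empty, Nat.zero_add] at hstab
    -- assemble: omega
    have hd : (1 : ℤ) ≤ ((Finset.univ.filter (fun e => Γ.dst e = v)).card : ℤ) := by exact_mod_cast hd1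
    have hg : (0 : ℤ) ≤ (Γ.genus v : ℤ) := Int.natCast_nonneg _
    have hk : (0 : ℤ) ≤ ((Finset.univ.filter (fun i => Γ.legAt i = v)).card : ℤ) := Int.natCast_nonneg _
    omega
  refine ⟨key, ?_⟩
  set B := Finset.univ.filter (fun v : Γ.V => Γ.level v = -(Γ.L : ℤ)) with hB
  rcases B.eq_empty_or_nonempty with hBe | ⟨v0, hv0⟩
  · simp [hBe]
  · have hv0' : Γ.level v0 = -(Γ.L : ℤ) := by simpa [hB] using hv0
    obtain ⟨i0, -, -⟩ := key v0 hv0'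
    classical
    have hmain : B.card ≤ (Finset.univ.filter (fun i => 0 ≤ μ i)).card := by
      apply Finset.card_le_card_of_injOn
        (fun v => if h : Γ.level v = -(Γ.L : ℤ) then (key v h).choose else i0)
      · intro v hvB
        have hvl : Γ.level v = -(Γ.L : ℤ) := by simpa [hB] using hvB
        simp only [hvl, dif_pos]
        have := (key v hvl).choose_spec
        simp [this.2]
      · intro a haB b hbB hab
        have hal : Γ.level a = -(Γ.L : ℤ) := by simpa [hB] using haB
        have hbl : Γ.level b = -(Γ.L : ℤ) := by simpa [hB] using hbB
        simp only [hal, hbl, dif_pos] at hab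
        have ha := (key a hal).choose_spec.1
        have hb := (key b hbl).choose_spec.1
        rw [← ha, ← hb, hab]
    refine hmain.trans ?_
    have hsplit : (Finset.univ.filter (fun i => 0 ≤ μ i)) ⊆
        (Finset.univ.filter (fun i => 0 < μ i)) ∪ (Finset.univ.filter (fun i => μ i = 0)) := by
      intro i hi
      simp only [Finset.mem_filter, Finset.mem_union, Finset.mem_univ, true_and] at hi ⊢
      omega
    exact (Finset.card_le_card hsplit).trans (Finset.card_union_le _ _)
end

section
/- Let Γ be an enhanced level graph with admissible enhancement and let S ⊆ E be any set of edges. Form the contraction Γ/S by collapsing each connected component C of the subgraph (V,S) to a single vertex whose genus is the sum of the genera of the vertices of C plus the first Betti number |E(C)|−|V(C)|+1 of C, retaining all edges not in S with their enhancements and all legs with their orders. Then Γ/S is again admissible: every vertex w of Γ/S satisfies deg(w) = 2g(w)−2. Moreover, if Γ is connected, the total genus is preserved: ∑ g(w) + |E/S| − |V/S| + 1 = ∑ g(v) + |E| − |V| + 1. -/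
open ELG

/-- contracting any set `S` of edges of an admissible enhanced
level graph (merging each connected component of `(V, S)` to a vertex whose
genus is the sum of the genera plus the first Betti number of the component)
again yields an admissible graph, and the total genus is preserved if `Γ` is
connected.  Here `W` is the set of components, `π` the component map. -/
theorem contraction_admissible_and_genus_preserved (n : ℕ) (μ : Fin n → ℤ)
    (Γ : ELG n μ) (hadm : Γ.Admissible) (S : Finset Γ.E)
    (W : Type) [Fintype W] [DecidableEq W] (π : Γ.V → W)
    (hsurj : Function.Surjective π)
    (hfib : ∀ a b, π a = π b ↔ Relation.EqvGen (Γ.contractRel S) a b)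
    (gNew : W → ℤ)
    (hg : ∀ w, gNew w =
      (∑ v ∈ Finset.univ.filter (fun v => π v = w), (Γ.genus v : ℤ))
        + ((S.filter (fun e => π (Γ.src e) = w)).card : ℤ)
        - ((Finset.univ.filter (fun v : Γ.V => π v = w)).card : ℤ) + 1) :
    (∀ w : W,
      (∑ i ∈ Finset.univ.filter (fun i => π (Γ.legAt i) = w), μ i)
        + (∑ e ∈ (Finset.univ \ S).filter (fun e => π (Γ.src e) = w),
            ((Γ.kappa e : ℤ) - 1))
        + (∑ e ∈ (Finset.univ \ S).filter (fun e => π (Γ.dst e) = w),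
            (-(Γ.kappa e : ℤ) - 1))
      = 2 * gNew w - 2) ∧
    (Γ.Connected →
      (∑ w, gNew w) + ((Fintype.card Γ.E : ℤ) - (S.card : ℤ))
        - (Fintype.card W : ℤ) + 1 = Γ.totalGenus) := by

  classical
  have hS : ∀ e ∈ S, π (Γ.src e) = π (Γ.dst e) := fun e he =>
    (hfib _ _).mpr (Relation.EqvGen.rel _ _ ⟨e, he, Or.inl ⟨rfl, rfl⟩⟩)
  have hsplit : ∀ (p : Γ.E → Prop) [DecidablePred p] (f : Γ.E → ℤ),
      ∑ e ∈ Finset.univ.filter p, f e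
        = ∑ e ∈ (Finset.univ \ S).filter p, f e + ∑ e ∈ S.filter p, f e := by
    intro p _ f
    rw [← Finset.sum_union (Finset.disjoint_filter_filter Finset.sdiff_disjoint),
      ← Finset.filter_union, Finset.sdiff_union_of_subset (Finset.subset_univ S)]
  constructor
  · intro w
    have hA : ∑ v ∈ Finset.univ.filter (fun v => π v = w), Γ.deg v
        = 2 * (∑ v ∈ Finset.univ.filter (fun v => π v = w), (Γ.genus v : ℤ))
          - 2 * ((Finset.univ.filter (fun v : Γ.V => π v = w)).card : ℤ) := by
      rw [Finset.sum_congr rfl (fun v _ => hadm v), Finset.sum_sub_distrib,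
        ← Finset.mul_sum, Finset.sum_const]
      push_cast; ring
    have hlegs : ∑ v ∈ Finset.univ.filter (fun v => π v = w),
          ∑ i ∈ Finset.univ.filter (fun i => Γ.legAt i = v), μ i
        = ∑ i ∈ Finset.univ.filter (fun i => π (Γ.legAt i) = w), μ i := by
      rw [Finset.sum_fiberwise_eq_sum_filter]
      congr 1; ext i; simp
    have hsrc : ∑ v ∈ Finset.univ.filter (fun v => π v = w),
          ∑ e ∈ Finset.univ.filter (fun e => Γ.src e = v), ((Γ.kappa e : ℤ) - 1)
        = ∑ e ∈ Finset.univ.filter (fun e => π (Γ.src e) = w), ((Γ.kappa e : ℤ) - 1) := by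
      rw [Finset.sum_fiberwise_eq_sum_filter]
      congr 1; ext e; simp
    have hdst : ∑ v ∈ Finset.univ.filter (fun v => π v = w),
          ∑ e ∈ Finset.univ.filter (fun e => Γ.dst e = v), (-(Γ.kappa e : ℤ) - 1)
        = ∑ e ∈ Finset.univ.filter (fun e => π (Γ.dst e) = w), (-(Γ.kappa e : ℤ) - 1) := by
      rw [Finset.sum_fiberwise_eq_sum_filter]
      congr 1; ext e; simp
    have hB : ∑ v ∈ Finset.univ.filter (fun v => π v = w), Γ.deg v
        = (∑ i ∈ Finset.univ.filter (fun i => π (Γ.legAt i) = w), μ i)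
          + (∑ e ∈ Finset.univ.filter (fun e => π (Γ.src e) = w), ((Γ.kappa e : ℤ) - 1))
          + (∑ e ∈ Finset.univ.filter (fun e => π (Γ.dst e) = w), (-(Γ.kappa e : ℤ) - 1)) := by
      unfold ELG.deg
      rw [Finset.sum_add_distrib, Finset.sum_add_distrib, hlegs, hsrc, hdst]
    have hSdst : S.filter (fun e => π (Γ.dst e) = w) = S.filter (fun e => π (Γ.src e) = w) := by
      apply Finset.filter_congr
      intro e he
      simp [hS e he]
    have hScomb : (∑ e ∈ S.filter (fun e => π (Γ.src e) = w), ((Γ.kappa e : ℤ) - 1))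
        + (∑ e ∈ S.filter (fun e => π (Γ.dst e) = w), (-(Γ.kappa e : ℤ) - 1))
        = -2 * ((S.filter (fun e => π (Γ.src e) = w)).card : ℤ) := by
      rw [hSdst, ← Finset.sum_add_distrib]
      have : ∀ e ∈ S.filter (fun e => π (Γ.src e) = w),
          ((Γ.kappa e : ℤ) - 1) + (-(Γ.kappa e : ℤ) - 1) = -2 := by intro e _; ring
      rw [Finset.sum_congr rfl this, Finset.sum_const]
      push_cast; ring
    have h1 := hsplit (fun e => π (Γ.src e) = w) (fun e => ((Γ.kappa e : ℤ) - 1))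
    have h2 := hsplit (fun e => π (Γ.dst e) = w) (fun e => (-(Γ.kappa e : ℤ) - 1))
    rw [hg w]
    linarith [hA, hB, hScomb, h1, h2]
  · intro _
    have hg' : ∑ w, gNew w
        = (∑ v, (Γ.genus v : ℤ)) + (S.card : ℤ) - (Fintype.card Γ.V : ℤ)
          + (Fintype.card W : ℤ) := by
      rw [Finset.sum_congr rfl (fun w _ => hg w)]
      have e1 : ∑ w, ∑ v ∈ Finset.univ.filter (fun v => π v = w), (Γ.genus v : ℤ)
          = ∑ v, (Γ.genus v : ℤ) := Finset.sum_fiberwise _ _ _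
      have e2 : ∑ w, (((S.filter (fun e => π (Γ.src e) = w)).card : ℤ))
          = (S.card : ℤ) := by
        rw [← Nat.cast_sum]
        congr 1
        exact (Finset.card_eq_sum_card_fiberwise (fun e _ => Finset.mem_univ _)).symm
      have e3 : ∑ w : W, (((Finset.univ.filter (fun v : Γ.V => π v = w)).card : ℤ))
          = (Fintype.card Γ.V : ℤ) := by
        rw [← Nat.cast_sum]
        congr 1
        exact (Finset.card_eq_sum_card_fiberwise (fun v _ => Finset.mem_univ _)).symm
      simp only [Finset.sum_add_distrib, Finset.sum_sub_distrib, e1, e2, e3,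
        Finset.sum_const, Finset.card_univ, nsmul_eq_mul, mul_one]
    rw [hg']
    unfold ELG.totalGenus
    ring
end

section
/- Let μ be a tuple of non-negative integers (a holomorphic type). For any realizable two-level graph Γ of type μ, the profile (Γ,Γ) is empty. Moreover, if Γ and Γ' are non-isomorphic realizable two-level graphs of type μ, then the profiles (Γ,Γ') and (Γ',Γ) are not both non-empty. Consequently, the relation Γ ≺ Γ', defined by ‘the profile (Γ',Γ) is non-empty’, is irreflexive and antisymmetric on the set of isomorphism classes of realizable two-level graphs of type μ, and so generates a strict partial order. -/
open ELG

namespace ProfileAux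

open Finset

variable {n : ℕ} {μ : Fin n → ℤ}

/-- The key invariant of a two-level graph: the sum of `μ i + 1` over legs at
the top level plus the sum of all enhancements. -/
def cval (Γ : ELG n μ) : ℤ :=
  (∑ i ∈ Finset.univ.filter (fun i => Γ.level (Γ.legAt i) = 0), (μ i + 1))
    + ∑ e : Γ.E, (Γ.kappa e : ℤ)

lemma fiber_sum {α β : Type} [Fintype α] [Fintype β] [DecidableEq β]
    (g : α → β) (p : β → Prop) [DecidablePred p] (f : α → ℤ) :
    ∑ b ∈ univ.filter p, ∑ a ∈ univ.filter (fun a => g a = b), f a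
      = ∑ a ∈ univ.filter (fun a => p (g a)), f a := by
  have h1 : ∀ a : α, (∑ b ∈ univ.filter p, if g a = b then f a else 0)
      = if p (g a) then f a else 0 := by
    intro a
    rw [Finset.sum_ite_eq (univ.filter p) (g a) (fun _ => f a)]
    simp
  calc ∑ b ∈ univ.filter p, ∑ a ∈ univ.filter (fun a => g a = b), f a
      = ∑ b ∈ univ.filter p, ∑ a : α, if g a = b then f a else 0 := by
        refine sum_congr rfl fun b _ => ?_
        rw [Finset.sum_filter]
    _ = ∑ a : α, ∑ b ∈ univ.filter p, if g a = b then f a else 0 := Finset.sum_comm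
    _ = ∑ a : α, if p (g a) then f a else 0 := by simp_rw [h1]
    _ = ∑ a ∈ univ.filter (fun a => p (g a)), f a := (Finset.sum_filter _ _).symm

lemma cval_undegen {Λ Γ : ELG n μ} (m : ℕ) (D : Λ.UndegenData {m} Γ) :
    cval Γ = (∑ i ∈ univ.filter (fun i => -(m : ℤ) < Λ.level (Λ.legAt i)), (μ i + 1))
      + ∑ e ∈ univ.filter (fun e => Λ.Crosses e m), (Λ.kappa e : ℤ) := by
  have hmem : ∀ e, e ∉ Λ.contractedEdges {m} ↔ Λ.Crosses e m := by
    intro e; simp [ELG.contractedEdges]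
  unfold cval
  congr 1
  · have hfilter : (univ.filter fun i => Γ.level (Γ.legAt i) = 0)
        = univ.filter fun i => -(m : ℤ) < Λ.level (Λ.legAt i) := by
      refine filter_congr fun i _ => ?_
      rw [D.leg_map i, D.level_map, Finset.filter_singleton]
      split_ifs with h <;> · simp only [Finset.card_singleton, Finset.card_empty]; omega
    rw [hfilter]
  · have hsub : ∑ e ∈ univ.filter (fun e => e ∉ Λ.contractedEdges {m}), (Λ.kappa e : ℤ)
        = ∑ x : {e : Λ.E // e ∉ Λ.contractedEdges {m}}, (Λ.kappa x.val : ℤ) :=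
      Finset.sum_subtype _ (fun x => by simp) _
    calc ∑ e : Γ.E, (Γ.kappa e : ℤ)
        = ∑ x : {e : Λ.E // e ∉ Λ.contractedEdges {m}}, (Γ.kappa (D.eEquiv x) : ℤ) :=
          (Equiv.sum_comp D.eEquiv fun e => (Γ.kappa e : ℤ)).symm
      _ = ∑ x : {e : Λ.E // e ∉ Λ.contractedEdges {m}}, (Λ.kappa x.val : ℤ) := by
          simp only [D.kappa_map]
      _ = ∑ e ∈ univ.filter (fun e => e ∉ Λ.contractedEdges {m}), (Λ.kappa e : ℤ) :=
          hsub.symm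
      _ = ∑ e ∈ univ.filter (fun e => Λ.Crosses e m), (Λ.kappa e : ℤ) := by
          rw [filter_congr fun e _ => hmem e]

lemma cval_lt {Γ₁ Γ₂ Λ : ELG n μ}
    (hreal : Λ.Realizable) (hL : Λ.L = 2)
    (h1 : Λ.IsUndegenOf {1} Γ₁) (h2 : Λ.IsUndegenOf {2} Γ₂) :
    cval Γ₁ < cval Γ₂ := by
  obtain ⟨D₁⟩ := h1
  obtain ⟨D₂⟩ := h2
  obtain ⟨hconn, hstab, hadm, hnh, -⟩ := hreal
  have hbd : ∀ v, -2 ≤ Λ.level v ∧ Λ.level v ≤ 0 := by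
    intro v
    have h := Λ.level_mem v
    rw [hL] at h
    exact ⟨by exact_mod_cast h.1, h.2⟩
  have hedge : ∀ e, Λ.level (Λ.dst e) < Λ.level (Λ.src e) := fun e =>
    lt_of_le_of_ne (Λ.level_mono e) fun h => hnh e h.symm
  rw [cval_undegen 1 D₁, cval_undegen 2 D₂]
  -- rewrite the four filtered sums into canonical forms
  have hleg1 : univ.filter (fun i => -((1 : ℕ) : ℤ) < Λ.level (Λ.legAt i))
      = univ.filter (fun i => Λ.level (Λ.legAt i) = 0) := by
    refine filter_congr fun i _ => ?_
    have := hbd (Λ.legAt i); push_cast; omega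
  have hleg2 : univ.filter (fun i => -((2 : ℕ) : ℤ) < Λ.level (Λ.legAt i))
      = univ.filter (fun i => Λ.level (Λ.legAt i) = 0 ∨ Λ.level (Λ.legAt i) = -1) := by
    refine filter_congr fun i _ => ?_
    have := hbd (Λ.legAt i); push_cast; omega
  have hcr1 : univ.filter (fun e => Λ.Crosses e 1)
      = univ.filter (fun e => Λ.level (Λ.src e) = 0) := by
    refine filter_congr fun e _ => ?_
    have h1 := hbd (Λ.src e); have h2 := hbd (Λ.dst e); have h3 := hedge e
    simp only [ELG.Crosses]; push_cast; omega
  have hcr2 : univ.filter (fun e => Λ.Crosses e 2)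
      = univ.filter (fun e => Λ.level (Λ.dst e) = -2) := by
    refine filter_congr fun e _ => ?_
    have h1 := hbd (Λ.src e); have h2 := hbd (Λ.dst e); have h3 := hedge e
    simp only [ELG.Crosses]; push_cast; omega
  rw [hleg1, hleg2, hcr1, hcr2]
  -- split the top-leg sum of Γ₂
  have hsplit : ∑ i ∈ univ.filter
        (fun i => Λ.level (Λ.legAt i) = 0 ∨ Λ.level (Λ.legAt i) = -1), (μ i + 1)
      = (∑ i ∈ univ.filter (fun i => Λ.level (Λ.legAt i) = 0), (μ i + 1))
        + ∑ i ∈ univ.filter (fun i => Λ.level (Λ.legAt i) = -1), (μ i + 1) := by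
    rw [filter_or, Finset.sum_union]
    rw [Finset.disjoint_left]
    intro a ha hb
    simp only [mem_filter, mem_univ, true_and] at ha hb
    omega
  -- complements for the edge sums
  have hKsrc : (∑ e ∈ univ.filter (fun e => Λ.level (Λ.src e) = 0), (Λ.kappa e : ℤ))
      + ∑ e ∈ univ.filter (fun e => Λ.level (Λ.src e) = -1), (Λ.kappa e : ℤ)
      = ∑ e : Λ.E, (Λ.kappa e : ℤ) := by
    rw [← Finset.sum_filter_add_sum_filter_not univ (fun e => Λ.level (Λ.src e) = 0)]
    congr 1
    refine sum_congr ?_ fun _ _ => rfl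
    refine filter_congr fun e _ => ?_
    have h1 := hbd (Λ.src e); have h2 := hbd (Λ.dst e); have h3 := hedge e
    constructor
    · intro h; omega
    · intro h; omega
  have hKdst : (∑ e ∈ univ.filter (fun e => Λ.level (Λ.dst e) = -1), (Λ.kappa e : ℤ))
      + ∑ e ∈ univ.filter (fun e => Λ.level (Λ.dst e) = -2), (Λ.kappa e : ℤ)
      = ∑ e : Λ.E, (Λ.kappa e : ℤ) := by
    rw [← Finset.sum_filter_add_sum_filter_not univ (fun e => Λ.level (Λ.dst e) = -1)]
    congr 1
    refine sum_congr ?_ fun _ _ => rfl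
    refine filter_congr fun e _ => ?_
    have h1 := hbd (Λ.src e); have h2 := hbd (Λ.dst e); have h3 := hedge e
    constructor
    · intro h; omega
    · intro h; omega
  rw [hsplit]
  -- the positive quantity
  have hpos : 0 < (∑ i ∈ univ.filter (fun i => Λ.level (Λ.legAt i) = -1), (μ i + 1))
      + (∑ e ∈ univ.filter (fun e => Λ.level (Λ.src e) = -1), (Λ.kappa e : ℤ))
      - ∑ e ∈ univ.filter (fun e => Λ.level (Λ.dst e) = -1), (Λ.kappa e : ℤ) := by
    rw [← fiber_sum Λ.legAt (fun v => Λ.level v = -1) (fun i => μ i + 1),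
        ← fiber_sum Λ.src (fun v => Λ.level v = -1) (fun e => (Λ.kappa e : ℤ)),
        ← fiber_sum Λ.dst (fun v => Λ.level v = -1) (fun e => (Λ.kappa e : ℤ)),
        ← Finset.sum_add_distrib, ← Finset.sum_sub_distrib]
    have hne : (univ.filter (fun v => Λ.level v = -1)).Nonempty := by
      obtain ⟨v, hv⟩ := Λ.level_surj ⟨1, by omega⟩
      refine ⟨v, mem_filter.mpr ⟨mem_univ v, ?_⟩⟩
      simpa using hv
    refine Finset.sum_pos (fun v _ => ?_) hne
    have hdeg := hadm v
    have hst := hstab v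
    unfold ELG.deg at hdeg
    unfold ELG.numLegsAt ELG.numHalfEdgesAt at hst
    rw [Finset.sum_sub_distrib, Finset.sum_const, Finset.sum_sub_distrib,
        Finset.sum_const, Finset.sum_neg_distrib] at hdeg
    rw [Finset.sum_add_distrib, Finset.sum_const]
    simp only [nsmul_eq_mul, mul_one] at hdeg ⊢
    push_cast at hdeg hst ⊢
    linarith
  linarith

end ProfileAux

/-- over a holomorphic type, the profile `(Γ, Γ)` of a realizable
two-level graph is always empty, and for non-isomorphic realizable two-level
graphs the profiles `(Γ, Γ')` and `(Γ', Γ)` are never both non-empty; hence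
`Γ ≺ Γ' ↔ (Γ', Γ)` non-empty is irreflexive and antisymmetric on isomorphism
classes and generates a strict partial order. -/
theorem profile_order_irrefl_antisymm (n : ℕ) (μ : Fin n → ℤ) (hμ : ∀ i, 0 ≤ μ i) :
    (∀ Γ : ELG n μ, Γ.Realizable → Γ.L = 1 → ¬ ProfileNonEmpty ![Γ, Γ]) ∧
    (∀ Γ Γ' : ELG n μ, Γ.Realizable → Γ.L = 1 → Γ'.Realizable → Γ'.L = 1 →
      ¬ Nonempty (Γ.Iso Γ') →
        ¬ (ProfileNonEmpty ![Γ, Γ'] ∧ ProfileNonEmpty ![Γ', Γ])) ∧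
    (∀ Γ Γ' : ELG n μ, Γ.Realizable → Γ.L = 1 → Γ'.Realizable → Γ'.L = 1 →
      ProfileNonEmpty ![Γ', Γ] → ProfileNonEmpty ![Γ, Γ'] → Nonempty (Γ.Iso Γ')) := by
  have key : ∀ Γ Γ' : ELG n μ, ProfileNonEmpty ![Γ, Γ'] →
      ProfileAux.cval Γ < ProfileAux.cval Γ' := by
    rintro Γ Γ' ⟨Λ, hreal, hL, hund⟩
    have h1 := hund 0
    have h2 := hund 1
    simp only [Matrix.cons_val_zero, Matrix.cons_val_one, Matrix.head_cons,
      Fin.val_zero, Fin.val_one, zero_add] at h1 h2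
    exact ProfileAux.cval_lt hreal hL (by simpa using h1) (by simpa using h2)
  refine ⟨?_, ?_, ?_⟩
  · intro Γ _ _ h
    exact absurd (key Γ Γ h) (lt_irrefl _)
  · rintro Γ Γ' _ _ _ _ _ ⟨hA, hB⟩
    exact absurd (key Γ Γ' hA) (not_lt.mpr (le_of_lt (key Γ' Γ hB)))
  · intro Γ Γ' _ _ _ _ hA hB
    exact absurd (key Γ Γ' hB) (not_lt.mpr (le_of_lt (key Γ' Γ hA)))
end

section
/- The profile map on enhanced level graphs is not injective. Concretely, for the type μ=(4) (genus 3): let H be the three-level graph with vertices v0 (genus 1, level 0), v1 (genus 1, level −1) and v2 (genus 0, level −2, carrying the single leg of order 4), with one edge v0v1 of enhancement 1, one edge v1v2 of enhancement 3, and one long edge v0v2 of enhancement 1; let G be the three-level graph with vertices w0 (genus 1, level 0), w1 (genus 0, level −1) and w2 (genus 0, level −2, carrying the leg of order 4), with two edges w0w1 both of enhancement 1 and two edges w1w2 of enhancements 1 and 3. Then G and H are both realizable, they are not isomorphic, and yet δ_1(G) ≅ δ_1(H) and δ_2(G) ≅ δ_2(H), so G and H have the same profile. -/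
open ELG

/-- The three-level graph `G` of type `μ = (4)`: vertices `w0` (genus 1,
level 0), `w1` (genus 0, level −1), `w2` (genus 0, level −2, carrying the leg
of order 4); two edges `w0w1` of enhancement 1 and two edges `w1w2` of
enhancements 1 and 3. -/
def Ggraph : ELG 1 ![(4 : ℤ)] where
  V := Fin 3
  E := Fin 4
  fintypeV := inferInstance
  decEqV := inferInstance
  fintypeE := inferInstance
  decEqE := inferInstance
  src := ![0, 0, 1, 1]
  dst := ![1, 1, 2, 2]
  legAt := ![2]
  genus := ![1, 0, 0]
  level := ![0, -1, -2]
  L := 2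
  level_mem := by decide
  level_surj := by decide
  level_mono := by decide
  kappa := ![1, 1, 1, 3]
  kappa_zero_iff := by decide

/-- The three-level graph `H` of type `μ = (4)`: vertices `v0` (genus 1,
level 0), `v1` (genus 1, level −1), `v2` (genus 0, level −2, carrying the leg
of order 4); one edge `v0v1` of enhancement 1, one edge `v1v2` of enhancement 3
and one long edge `v0v2` of enhancement 1. -/
def Hgraph : ELG 1 ![(4 : ℤ)] where
  V := Fin 3
  E := Fin 3
  fintypeV := inferInstance
  decEqV := inferInstance
  fintypeE := inferInstance
  decEqE := inferInstance
  src := ![0, 1, 0]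
  dst := ![1, 2, 2]
  legAt := ![2]
  genus := ![1, 1, 0]
  level := ![0, -1, -2]
  L := 2
  level_mem := by decide
  level_surj := by decide
  level_mono := by decide
  kappa := ![1, 3, 1]
  kappa_zero_iff := by decide

/-
Everything is a finite computation on explicit graphs. `δ₁` contracts the edges below level -1:
in both `G` and `H` this merges the two lower vertices into a genus-1 vertex joined to the top by
two edges of enhancement 1 (in `G` the double edge `w₁w₂` contributes the genus, in `H` the vertex
`v₁`). `δ₂` contracts the edges above level -1: in both graphs the top vertex becomes genus 2 and
is joined to the leg vertex by edges of enhancements 1 and 3. Yet `G` has a genus-0 vertex on the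
middle level and `H` does not.
-/

namespace ELG

variable {n : ℕ} {μ : Fin n → ℤ}

instance (Γ : ELG n μ) (e : Γ.E) (a b : Γ.V) : Decidable (Γ.Connects e a b) :=
  inferInstanceAs (Decidable (_ ∨ _))

instance (Γ : ELG n μ) (T : Finset Γ.E) (a b : Γ.V) : Decidable (Γ.contractRel T a b) :=
  inferInstanceAs (Decidable (∃ e ∈ T, _))

instance (Γ : ELG n μ) : Decidable Γ.Admissible := inferInstanceAs (Decidable (∀ _, _))

instance (Γ : ELG n μ) : Decidable Γ.Stable := inferInstanceAs (Decidable (∀ _, _))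

instance (Γ : ELG n μ) : Decidable Γ.NoHorizontal := inferInstanceAs (Decidable (∀ _, _))

instance (Γ : ELG n μ) (v : Γ.V) : Decidable (Γ.Inconvenient v) :=
  have := @Multiset.decidableExistsMultiset
  inferInstanceAs (Decidable (_ ∧ _ ∧ _))

lemma connected_of_reachable (Γ : ELG n μ) (v₀ : Γ.V)
    (h : ∀ v, Relation.ReflTransGen Γ.Adj v₀ v) : Γ.Connected := by
  have : Std.Symm Γ.Adj := ⟨fun _ _ ⟨e, he⟩ => ⟨e, Or.symm he⟩⟩
  exact ⟨⟨v₀⟩, fun a b => (Std.Symm.symm _ _ (h a)).trans (h b)⟩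

lemma hasHighCycleAt_of_parallel_edges (Γ : ELG n μ) {v w : Γ.V} {e₁ e₂ : Γ.E}
    (hvw : v ≠ w) (he : e₁ ≠ e₂) (h₁ : Γ.Connects e₁ v w) (h₂ : Γ.Connects e₂ w v)
    (hlevel : Γ.level v ≤ Γ.level w) : Γ.HasHighCycleAt v := by
  refine ⟨2, le_rfl, ![v, w], ![e₁, e₂], ?_, ?_, rfl, ?_, ?_⟩
  · intro i j hij
    fin_cases i <;> fin_cases j <;> simp_all [eq_comm]
  · intro i j hij
    fin_cases i <;> fin_cases j <;> simp_all [eq_comm]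
  · intro k; fin_cases k <;> assumption
  · intro k; fin_cases k <;> simp [hlevel]

end ELG

lemma Relation.eq_iff_eqvGen_of_fibers {α β : Type*} {r : α → α → Prop} {f : α → β}
    (hr : ∀ a b, r a b → f a = f b) (hf : ∀ a b, f a = f b → a = b ∨ r a b) (a b : α) :
    f a = f b ↔ Relation.EqvGen r a b := by
  refine ⟨fun h => ?_, fun h => ?_⟩
  · rcases hf a b h with rfl | hab
    exacts [.refl a, .rel a b hab]
  · have hker : Equivalence fun a b => f a = f b := ⟨fun _ => rfl, .symm, .trans⟩
    exact hker.eqvGen_iff.mp (h.mono hr)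

def delta₁Graph : ELG 1 ![(4 : ℤ)] where
  V := Fin 2
  E := Fin 2
  fintypeV := inferInstance
  decEqV := inferInstance
  fintypeE := inferInstance
  decEqE := inferInstance
  src := ![0, 0]
  dst := ![1, 1]
  legAt := ![1]
  genus := ![1, 1]
  level := ![0, -1]
  L := 1
  level_mem := by decide
  level_surj := by decide
  level_mono := by decide
  kappa := ![1, 1]
  kappa_zero_iff := by decide

def delta₂Graph : ELG 1 ![(4 : ℤ)] where
  V := Fin 2
  E := Fin 2
  fintypeV := inferInstance
  decEqV := inferInstance
  fintypeE := inferInstance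
  decEqE := inferInstance
  src := ![0, 0]
  dst := ![1, 1]
  legAt := ![1]
  genus := ![2, 0]
  level := ![0, -1]
  L := 1
  level_mem := by decide
  level_surj := by decide
  level_mono := by decide
  kappa := ![1, 3]
  kappa_zero_iff := by decide

-- lets numerals and `decide` see `V` and `E` of these graphs as `Fin k`
attribute [reducible] Ggraph Hgraph delta₁Graph delta₂Graph

noncomputable def Ggraph.undegen₁ : Ggraph.UndegenData {1} delta₁Graph where
  vmap := ![0, 1, 1]
  vmap_surj := by decide
  fiber_eq := Relation.eq_iff_eqvGen_of_fibers (by decide) (by decide)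
  eEquiv := Equiv.ofBijective (fun e => if e.val = 0 then 0 else 1) (by decide)
  src_map := by decide
  dst_map := by decide
  kappa_map := by decide
  leg_map := by decide
  genus_map := by decide
  level_map := by decide
  newL := rfl

noncomputable def Ggraph.undegen₂ : Ggraph.UndegenData {2} delta₂Graph where
  vmap := ![0, 0, 1]
  vmap_surj := by decide
  fiber_eq := Relation.eq_iff_eqvGen_of_fibers (by decide) (by decide)
  eEquiv := Equiv.ofBijective (fun e => if e.val = 2 then 0 else 1) (by decide)
  src_map := by decide
  dst_map := by decide
  kappa_map := by decide
  leg_map := by decide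
  genus_map := by decide
  level_map := by decide
  newL := rfl

noncomputable def Hgraph.undegen₁ : Hgraph.UndegenData {1} delta₁Graph where
  vmap := ![0, 1, 1]
  vmap_surj := by decide
  fiber_eq := Relation.eq_iff_eqvGen_of_fibers (by decide) (by decide)
  eEquiv := Equiv.ofBijective (fun e => if e.val = 0 then 0 else 1) (by decide)
  src_map := by decide
  dst_map := by decide
  kappa_map := by decide
  leg_map := by decide
  genus_map := by decide
  level_map := by decide
  newL := rfl

noncomputable def Hgraph.undegen₂ : Hgraph.UndegenData {2} delta₂Graph where
  vmap := ![0, 0, 1]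
  vmap_surj := by decide
  fiber_eq := Relation.eq_iff_eqvGen_of_fibers (by decide) (by decide)
  eEquiv := Equiv.ofBijective (fun e => if e.val = 2 then 0 else 1) (by decide)
  src_map := by decide
  dst_map := by decide
  kappa_map := by decide
  leg_map := by decide
  genus_map := by decide
  level_map := by decide
  newL := rfl

lemma Ggraph.realizable : Ggraph.Realizable := by
  have hconn : Ggraph.Connected := by
    have h01 : Ggraph.Adj 0 1 := ⟨0, by decide⟩
    have h12 : Ggraph.Adj 1 2 := ⟨2, by decide⟩
    refine Ggraph.connected_of_reachable 0 fun v => ?_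
    fin_cases v
    exacts [.refl, .single h01, .tail (.single h01) h12]
  refine ⟨hconn, by decide, by decide, by decide, fun v hv => ?_⟩
  -- `w₁` (poles 2, 2) and `w₂` (poles 2, 4) are inconvenient; each has a double edge going up
  fin_cases v
  · exact absurd hv (by decide)
  · exact Ggraph.hasHighCycleAt_of_parallel_edges (w := 0) (e₁ := 0) (e₂ := 1)
      (by decide) (by decide) (by decide) (by decide) (by decide)
  · exact Ggraph.hasHighCycleAt_of_parallel_edges (w := 1) (e₁ := 2) (e₂ := 3)
      (by decide) (by decide) (by decide) (by decide) (by decide)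

lemma Hgraph.realizable : Hgraph.Realizable := by
  have hconn : Hgraph.Connected := by
    have h01 : Hgraph.Adj 0 1 := ⟨0, by decide⟩
    have h02 : Hgraph.Adj 0 2 := ⟨2, by decide⟩
    refine Hgraph.connected_of_reachable 0 fun v => ?_
    fin_cases v
    exacts [.refl, .single h01, .single h02]
  refine ⟨hconn, by decide, by decide, by decide, fun v hv => ?_⟩
  -- only `v₂` (poles 2, 4) is inconvenient, and it lies on the triangle
  fin_cases v
  · exact absurd hv (by decide)
  · exact absurd hv (by decide)
  · exact ⟨3, by norm_num, ![2, 0, 1], ![2, 0, 1], by decide, by decide, rfl, by decide,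
      by decide⟩

lemma Ggraph.not_nonempty_iso_Hgraph : ¬ Nonempty (Ggraph.Iso Hgraph) := by
  rintro ⟨φ⟩
  -- `G` has a genus-0 vertex on level -1, `H` has none
  have hH : ∀ x : Hgraph.V, ¬ (Hgraph.level x = -1 ∧ Hgraph.genus x = 0) := by decide
  exact hH (φ.vEquiv 1) ⟨φ.level_map 1, φ.genus_map 1⟩

/-- the profile map is not injective: `G` and `H` are realizable
and non-isomorphic, yet `δ₁(G) ≅ δ₁(H)` and `δ₂(G) ≅ δ₂(H)`. -/
theorem profile_not_injective :
    Ggraph.Realizable ∧ Hgraph.Realizable ∧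
    ¬ Nonempty (Ggraph.Iso Hgraph) ∧
    (∃ A : ELG 1 ![(4 : ℤ)], Ggraph.IsUndegenOf {1} A ∧ Hgraph.IsUndegenOf {1} A) ∧
    (∃ B : ELG 1 ![(4 : ℤ)], Ggraph.IsUndegenOf {2} B ∧ Hgraph.IsUndegenOf {2} B) :=
  ⟨Ggraph.realizable, Hgraph.realizable, Ggraph.not_nonempty_iso_Hgraph,
    ⟨delta₁Graph, ⟨Ggraph.undegen₁⟩, ⟨Hgraph.undegen₁⟩⟩, ⟨delta₂Graph, ⟨Ggraph.undegen₂⟩, ⟨Hgraph.undegen₂⟩⟩⟩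
end
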